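/- Let r ≥ 1 and let V_r = ℤ[X]/(U_r) with ℤ-basis u_0, …, u_{r−1}. Then for all 0 ≤ n, n' < r, the coefficient of u_0 in the basis expansion of the product u_n · u_{n'} equals 1 if n = n' and equals 0 otherwise. (Equivalently, the trace functional t(a) = coefficient of u_0 in a satisfies t(u_n u_{n'}) = δ_{n,n'}.) -/

import Mathlib

open Polynomial

/-- The polynomials `U n` with `U 0 = 1`, `U 1 = X`, `U (n+1) = X * U n - U (n-1)`. -/
noncomputable def U (n : ℕ) : Polynomial ℤ := Polynomial.dickson 2 1 n

/-- The Verlinde algebra `V r = ℤ[X]/(U r)`. -/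
abbrev Verlinde (r : ℕ) : Type := Polynomial ℤ ⧸ Ideal.span {U r}

/-- `u r i` is the image of `U i` in the Verlinde algebra `V r`. -/
noncomputable def u (r i : ℕ) : Verlinde r :=
  Ideal.Quotient.mk (Ideal.span {U r}) (U i)

lemma U_zero : U 0 = 1 := by
  simp [U, Polynomial.dickson_zero]
  norm_num

lemma U_one : U 1 = X := Polynomial.dickson_one 2 1

lemma U_add_two (n : ℕ) : U (n+2) = X * U (n+1) - U n := by
  simp [U, Polynomial.dickson_add_two]

lemma key (a b : ℕ) : U (a+1) * U (a+b+1) = U a * U (a+b+2) + U b := by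
  induction a with
  | zero =>
      simp only [Nat.zero_add, U_zero, U_one, one_mul]
      have := U_add_two b
      linear_combination -this
  | succ a ih =>
      have r1 : U (a+2) = X * U (a+1) - U a := U_add_two a
      have r2 : U (a+b+3) = X * U (a+b+2) - U (a+b+1) := U_add_two (a+b+1)
      have g : U (a+2) * U (a+b+2) = U (a+1) * U (a+b+3) + U b := by
        linear_combination U (a+b+2) * r1 - U (a+1) * r2 + ih
      rw [show a+1+b+1 = a+b+2 from by omega, show a+1+b+2 = a+b+3 from by omega]
      exact g

lemma U_mul_U (a b : ℕ) : U a * U (a + b) = ∑ k ∈ Finset.range (a+1), U (b + 2*k) := by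
  induction a generalizing b with
  | zero =>
      simp [U_zero]
  | succ a ih =>
      have h := key a b
      rw [show a+1+b = a+b+1 from by omega, h, show a+b+2 = a+(b+2) from by omega, ih (b+2),
        Finset.sum_range_succ' (fun k => U (b + 2*k)) (a+1)]
      congr 1
      exact Finset.sum_congr rfl fun k _ => by rw [show b+2+2*k = b+2*(k+1) from by ring]

lemma u_r_eq_zero (r : ℕ) : u r r = 0 := by
  rw [u, Ideal.Quotient.eq_zero_iff_mem]
  exact Ideal.subset_span rfl

lemma u_add_two (r n : ℕ) :
    u r (n+2) = Ideal.Quotient.mk (Ideal.span {U r}) X * u r (n+1) - u r n := by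
  rw [u, u, u, U_add_two, map_sub, map_mul]

lemma u_reflect (r : ℕ) (hr : 1 ≤ r) : ∀ j, j ≤ r → u r (r + j) = - u r (r - j)
  | 0, _ => by rw [Nat.add_zero, Nat.sub_zero, u_r_eq_zero, neg_zero]
  | 1, h => by
      have e : r + 1 = (r - 1) + 2 := by omega
      rw [e, u_add_two, show r - 1 + 1 = r from by omega, u_r_eq_zero, mul_zero, zero_sub]
  | (j+2), h => by
      have ih1 := u_reflect r hr (j+1) (by omega)
      have ih0 := u_reflect r hr j (by omega)
      have e : r + (j+2) = (r + j) + 2 := by omega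
      rw [e, u_add_two, show r + j + 1 = r + (j+1) from by omega, ih1, ih0]
      have e2 : r - j = (r - (j+2)) + 2 := by omega
      rw [e2, u_add_two, show r - (j+2) + 1 = r - (j+1) from by omega]
      ring

lemma repr_u (r : ℕ) (hr : 1 ≤ r) (b : Module.Basis (Fin r) ℤ (Verlinde r))
    (hb : ∀ i : Fin r, b i = u r i) (j : ℕ) (hj : j ≤ 2*r - 2) :
    b.repr (u r j) (⟨0, hr⟩ : Fin r) = if j = 0 then 1 else 0 := by
  rcases lt_or_ge j r with h | h
  · rw [← hb ⟨j, h⟩, b.repr_self, Finsupp.single_apply]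
    simp [Fin.mk.injEq]
  · by_cases hjr : j = r
    · subst hjr
      rw [u_r_eq_zero, map_zero, Finsupp.coe_zero, Pi.zero_apply,
        if_neg (by omega : ¬ j = 0)]
    have hr2 : 2 ≤ r := by omega
    have hjr' : r < j := lt_of_le_of_ne h (fun a => hjr a.symm)
    have hm : j - r ≤ r := by omega
    have e : j = r + (j - r) := by omega
    rw [e, u_reflect r hr (j - r) hm, map_neg, Finsupp.neg_apply]
    have h2 : r - (j - r) < r := by omega
    have h3 : r - (j - r) ≠ 0 := by omega
    rw [← hb ⟨r - (j - r), h2⟩, b.repr_self, Finsupp.single_apply]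
    simp only [Fin.mk.injEq]
    rw [if_neg h3, if_neg (by omega : ¬ r + (j - r) = 0), neg_zero]

lemma main_le (r : ℕ) (hr : 1 ≤ r) (b : Module.Basis (Fin r) ℤ (Verlinde r))
    (hb : ∀ i : Fin r, b i = u r i) (n n' : ℕ) (hle : n ≤ n') (hn' : n' < r) :
    b.repr (u r n * u r n') (⟨0, hr⟩ : Fin r) = if n = n' then 1 else 0 := by
  have hprod : u r n * u r n' = ∑ k ∈ Finset.range (n+1), u r ((n' - n) + 2*k) := by
    have e : n' = n + (n' - n) := by omega
    rw [u, u, ← map_mul]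
    conv_lhs => rw [e]
    rw [U_mul_U, map_sum]
    rfl
  rw [hprod, map_sum, Finsupp.finset_sum_apply]
  have hterm : ∀ k ∈ Finset.range (n+1),
      b.repr (u r ((n' - n) + 2*k)) (⟨0, hr⟩ : Fin r)
        = if (n' - n) + 2*k = 0 then 1 else 0 := by
    intro k hk
    exact repr_u r hr b hb _ (by simp at hk; omega)
  rw [Finset.sum_congr rfl hterm]
  by_cases hd : n = n'
  · subst hd
    simp only [Nat.sub_self, Nat.zero_add]
    rw [Finset.sum_eq_single 0]
    · simp
    · intro k hk hk0; simp [hk0]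
    · simp
  · have : ∀ k ∈ Finset.range (n+1), (if (n' - n) + 2*k = 0 then (1:ℤ) else 0) = 0 := by
      intro k _
      have : (n' - n) + 2*k ≠ 0 := by omega
      simp only [this, if_false]
    rw [Finset.sum_congr rfl this, Finset.sum_const_zero, if_neg hd]


/-- Let `r ≥ 1` and let `b` be the ℤ-basis `u 0, …, u (r-1)` of the
Verlinde algebra `V r`.  Then for all `n, n' < r`, the coefficient of `u 0` in the basis
expansion of `u n * u n'` is `1` if `n = n'` and `0` otherwise; i.e. the trace
`t(a) = κ(u 0, a)` satisfies `t (u n * u n') = δ_{n,n'}`. -/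
theorem verlinde_trace_orthogonality (r : ℕ) (hr : 1 ≤ r)
    (b : Module.Basis (Fin r) ℤ (Verlinde r)) (hb : ∀ i : Fin r, b i = u r i) :
    ∀ n n' : Fin r,
      b.repr (u r n * u r n') (⟨0, hr⟩ : Fin r) = if n = n' then 1 else 0 := by
  intro n n'
  rcases le_total (n : ℕ) (n' : ℕ) with h | h
  · rw [main_le r hr b hb n n' h n'.isLt]
    simp [Fin.ext_iff]
  · rw [mul_comm, main_le r hr b hb n' n h n.isLt]
    by_cases hd : n = n'
    · rw [if_pos (by rw [hd]), if_pos hd]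
    · rw [if_neg (fun he => hd (Fin.ext he.symm)), if_neg hd]
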